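/- The following identity holds in the extended nonnegative reals: Σ_u deg(u) · q_fin(u) = Σ_v deg(v) · q_0(v) · Σ_{n≥0} p_{2n}(v, v), where both outer sums are over all vertices of G. -/

import Mathlib

open MeasureTheory
open scoped ENNReal Classical

namespace CollisionsStmt

variable {V : Type*}

/-- One-step transition probabilities of the simple random walk on `G`:
`p(u,v) = 1/deg u` if `v` is adjacent to `u`, and `0` otherwise. -/
noncomputable def step (G : SimpleGraph V) [G.LocallyFinite] (u v : V) : ℝ≥0∞ :=
  if G.Adj u v then ((G.degree u : ℝ≥0∞))⁻¹ else 0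

/-- The `n`-step transition probabilities of the simple random walk on `G`. -/
noncomputable def pn (G : SimpleGraph V) [G.LocallyFinite] : ℕ → V → V → ℝ≥0∞
  | 0, u, v => if u = v then 1 else 0
  | n + 1, u, v => ∑' w, step G u w * pn G n w v

/-- `μ` is the law (on path space, via the Ionescu–Tulcea trajectory construction) of
two independent walks with one-step transition probabilities `p`, started at `a` and `b`
respectively; equivalently, the Markov chain on `V × V` with kernel `p ⊗ p` started at `(a, b)`.
The law is characterized by being a probability measure with the prescribed
finite-dimensional (cylinder) distributions. -/
def IsPairWalkMeasure [MeasurableSpace V] (p : V → V → ℝ≥0∞) (a b : V)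
    (μ : Measure (ℕ → V × V)) : Prop :=
  IsProbabilityMeasure μ ∧
    ∀ (n : ℕ) (x : ℕ → V × V),
      μ {ω | ∀ i ≤ n, ω i = x i} =
        (if x 0 = (a, b) then (1 : ℝ≥0∞) else 0) *
          ∏ i ∈ Finset.range n, (p (x i).1 (x (i + 1)).1 * p (x i).2 (x (i + 1)).2)

/-- The event that the two walks do not collide at any time `n ≥ 1`. -/
def noCollision : Set (ℕ → V × V) := {ω | ∀ n ≥ 1, (ω n).1 ≠ (ω n).2}

/-- The event that the two walks have their last collision at the vertex `v`: for some
`n ≥ 0`, `X_n = Y_n = v` and `X_m ≠ Y_m` for all `m > n`. -/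
def lastCollisionAt (v : V) : Set (ℕ → V × V) :=
  {ω | ∃ n : ℕ, ω n = (v, v) ∧ ∀ m > n, (ω m).1 ≠ (ω m).2}

/-- The event that the two walks collide at only finitely many times. -/
def finCollisions : Set (ℕ → V × V) := {ω | {n : ℕ | (ω n).1 = (ω n).2}.Finite}

/-- The event that the two walks collide at infinitely many times. -/
def infCollisions : Set (ℕ → V × V) := {ω | {n : ℕ | (ω n).1 = (ω n).2}.Infinite}

/-- The event that the two walks never collide (including at time `0`). -/
def neverCollide : Set (ℕ → V × V) := {ω | ∀ n : ℕ, (ω n).1 ≠ (ω n).2}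


/-!
Split the event of finitely many collisions according to the time `n` and the vertex `v` of the
last collision; the walks started at `u` collide at time `0`, so the event of no collision at all
is null. By the Markov property at time `n`, the last collision happens at time `n` in `v` with
probability `p_n(u, v)² · q_0(v)`. Reversibility, `deg u · p_n(u, v) = deg v · p_n(v, u)`, and
Chapman–Kolmogorov turn `Σ_u deg u · p_n(u, v)²` into `deg v · p_{2n}(v, v)`; all terms lie in
`ℝ≥0∞`, so the sums may be freely reordered.

The pair of walks is a Markov chain on `V × V`. Its Markov property is checked on cylinder events,
whose probabilities are sums over finite paths, and extends to all events because cylinders form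
a π-system generating the product σ-algebra.
-/

open Function

section IterKernel

variable {α : Type*} (P : α → α → ℝ≥0∞)

noncomputable def iterKernel : ℕ → α → α → ℝ≥0∞
  | 0, a, b => if a = b then 1 else 0
  | n + 1, a, b => ∑' c, P a c * iterKernel n c b

lemma iterKernel_zero (a b : α) : iterKernel P 0 a b = if a = b then 1 else 0 := rfl

lemma iterKernel_succ (n : ℕ) (a b : α) :
    iterKernel P (n + 1) a b = ∑' c, P a c * iterKernel P n c b := rfl

lemma iterKernel_one (a b : α) : iterKernel P 1 a b = P a b := by
  simp [iterKernel_succ, iterKernel_zero]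

lemma iterKernel_add (m n : ℕ) (a b : α) :
    iterKernel P (m + n) a b = ∑' c, iterKernel P m a c * iterKernel P n c b := by
  induction m generalizing a with
  | zero => simp [iterKernel_zero]
  | succ m ih =>
    calc iterKernel P (m + 1 + n) a b
        = ∑' d, ∑' c, P a d * (iterKernel P m d c * iterKernel P n c b) := by
          rw [Nat.add_right_comm, iterKernel_succ]
          simp_rw [ih, ENNReal.tsum_mul_left]
      _ = ∑' c, iterKernel P (m + 1) a c * iterKernel P n c b := by
          rw [ENNReal.tsum_comm]
          simp_rw [iterKernel_succ, ← ENNReal.tsum_mul_right, mul_assoc]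

lemma iterKernel_succ' (n : ℕ) (a b : α) :
    iterKernel P (n + 1) a b = ∑' c, iterKernel P n a c * P c b := by
  simp_rw [iterKernel_add, iterKernel_one]

variable {P}

lemma iterKernel_reversible {π : α → ℝ≥0∞} (hP : ∀ a b, π a * P a b = π b * P b a)
    (n : ℕ) (a b : α) : π a * iterKernel P n a b = π b * iterKernel P n b a := by
  induction n generalizing a b with
  | zero => by_cases h : a = b <;> simp [iterKernel_zero, h, eq_comm]
  | succ n ih =>
    calc π a * iterKernel P (n + 1) a b
        = ∑' c, P c a * (π c * iterKernel P n c b) := by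
          simp_rw [iterKernel_succ, ← ENNReal.tsum_mul_left, ← mul_assoc, hP a]
          exact tsum_congr fun c => by ring
      _ = π b * iterKernel P (n + 1) b a := by
          simp_rw [ih _ b, iterKernel_succ', ← ENNReal.tsum_mul_left]
          exact tsum_congr fun c => by ring

lemma tsum_mul_iterKernel_mul_self {π : α → ℝ≥0∞} (hP : ∀ a b, π a * P a b = π b * P b a)
    (n : ℕ) (b : α) :
    ∑' a, π a * (iterKernel P n a b * iterKernel P n a b) = π b * iterKernel P (2 * n) b b := by
  simp_rw [two_mul, iterKernel_add, ← ENNReal.tsum_mul_left, ← mul_assoc,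
    iterKernel_reversible hP n _ b]

lemma iterKernel_prod {β γ : Type*} (p : β → β → ℝ≥0∞) (q : γ → γ → ℝ≥0∞) (n : ℕ)
    (x y : β × γ) :
    iterKernel (fun x y : β × γ => p x.1 y.1 * q x.2 y.2) n x y
      = iterKernel p n x.1 y.1 * iterKernel q n x.2 y.2 := by
  induction n generalizing x with
  | zero =>
    by_cases h₁ : x.1 = y.1 <;> by_cases h₂ : x.2 = y.2 <;>
      simp [iterKernel_zero, Prod.ext_iff, h₁, h₂]
  | succ n ih =>
    simp_rw [iterKernel_succ, ih, ENNReal.tsum_prod', ← ENNReal.tsum_mul_left,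
      ← ENNReal.tsum_mul_right]
    rw [ENNReal.tsum_comm]
    exact tsum_congr fun c => tsum_congr fun d => by ring

end IterKernel

section MarkovChain

variable {α : Type*}

def extendPath {N : ℕ} (y : Fin (N + 1) → α) : ℕ → α := fun i => y (Fin.clamp i N)

def shift (n : ℕ) (ω : ℕ → α) : ℕ → α := fun i => ω (i + n)

noncomputable def pathWeight (P : α → α → ℝ≥0∞) (N : ℕ) (x : ℕ → α) : ℝ≥0∞ :=
  ∏ i ∈ Finset.range N, P (x i) (x (i + 1))

noncomputable def pathSum (P : α → α → ℝ≥0∞) (a : α) (N : ℕ) (S : Set (ℕ → α)) : ℝ≥0∞ :=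
  ∑' y : Fin (N + 1) → α,
    if y 0 = a ∧ extendPath y ∈ S then pathWeight P N (extendPath y) else 0

@[simp]
lemma shift_zero (ω : ℕ → α) : shift 0 ω = ω := rfl

@[simp]
lemma extendPath_zero {N : ℕ} (y : Fin (N + 1) → α) : extendPath y 0 = y 0 := rfl

lemma extendPath_of_le {N : ℕ} (y : Fin (N + 1) → α) {i : ℕ} (hi : i ≤ N) :
    extendPath y i = y ⟨i, Nat.lt_succ_of_le hi⟩ := by
  simp [extendPath, Fin.clamp, Nat.min_eq_left hi]

lemma shift_one_extendPath_cons {N : ℕ} (a : α) (z : Fin (N + 1) → α) :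
    shift 1 (extendPath (Fin.cons a z : Fin (N + 2) → α)) = extendPath z := by
  funext i
  simp only [shift, extendPath, Fin.clamp]
  rw [show (⟨min (i + 1) (N + 1), _⟩ : Fin (N + 2)) = Fin.succ ⟨min i N, by omega⟩ from
    Fin.ext (by simp [Nat.succ_min_succ]), Fin.cons_succ]

lemma pathWeight_succ (P : α → α → ℝ≥0∞) (N : ℕ) (x : ℕ → α) :
    pathWeight P (N + 1) x = P (x 0) (x 1) * pathWeight P N (shift 1 x) := by
  rw [pathWeight, Finset.prod_range_succ', mul_comm]
  rfl

lemma pathSum_shift_one_preimage (P : α → α → ℝ≥0∞) (a : α) (N : ℕ) (T : Set (ℕ → α)) :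
    pathSum P a (N + 1) (shift 1 ⁻¹' T) = ∑' c, P a c * pathSum P c N T := by
  have hcons (c : α) (z : Fin (N + 1) → α) :
      (if (Fin.cons c z : Fin (N + 2) → α) 0 = a ∧ extendPath (Fin.cons c z) ∈ shift 1 ⁻¹' T
        then pathWeight P (N + 1) (extendPath (Fin.cons c z)) else 0)
        = if c = a then (if extendPath z ∈ T then P a (z 0) * pathWeight P N (extendPath z) else 0)
          else 0 := by
    have h₁ : extendPath (Fin.cons c z : Fin (N + 2) → α) 1 = z 0 :=
      congrFun (shift_one_extendPath_cons c z) 0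
    by_cases hc : c = a
    · subst hc
      simp [pathWeight_succ, h₁, shift_one_extendPath_cons]
    · simp [hc]
  calc pathSum P a (N + 1) (shift 1 ⁻¹' T)
      = ∑' z : Fin (N + 1) → α,
          if extendPath z ∈ T then P a (z 0) * pathWeight P N (extendPath z) else 0 := by
        rw [pathSum, ← (Fin.consEquiv fun _ => α).tsum_eq, ENNReal.tsum_prod']
        refine (tsum_congr fun c => tsum_congr fun z => hcons c z).trans ?_
        rw [ENNReal.tsum_comm]
        simp only [tsum_ite_eq]
    _ = ∑' z : Fin (N + 1) → α, ∑' c,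
          if z 0 = c ∧ extendPath z ∈ T then P a c * pathWeight P N (extendPath z) else 0 := by
        refine tsum_congr fun z => ?_
        rw [tsum_eq_single (z 0) fun c hc => if_neg fun h => hc h.1.symm]
        simp
    _ = ∑' c, P a c * pathSum P c N T := by
        rw [ENNReal.tsum_comm]
        simp_rw [pathSum, ← ENNReal.tsum_mul_left, mul_ite, mul_zero]

lemma pathSum_shift (P : α → α → ℝ≥0∞) (N n : ℕ) (a b : α) (B : Set (ℕ → α)) :
    pathSum P a (N + n) {ω | ω n = b ∧ shift n ω ∈ B} = iterKernel P n a b * pathSum P b N B := by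
  induction n generalizing a with
  | zero =>
    by_cases hab : a = b
    · subst hab
      simp [pathSum, iterKernel_zero, shift_zero]
    · simp only [pathSum, iterKernel_zero, hab, if_false, zero_mul]
      exact ENNReal.tsum_eq_zero.2 fun y => if_neg fun h => hab (h.1.symm.trans h.2.1)
  | succ n ih =>
    calc pathSum P a (N + (n + 1)) {ω | ω (n + 1) = b ∧ shift (n + 1) ω ∈ B}
        = ∑' c, P a c * pathSum P c (N + n) {ω | ω n = b ∧ shift n ω ∈ B} :=
          pathSum_shift_one_preimage P a (N + n) {ω | ω n = b ∧ shift n ω ∈ B}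
      _ = iterKernel P (n + 1) a b * pathSum P b N B := by
          simp_rw [ih, iterKernel_succ, ← ENNReal.tsum_mul_right, mul_assoc]

variable [MeasurableSpace α]

def IsMarkovChainMeasure (P : α → α → ℝ≥0∞) (a : α) (μ : Measure (ℕ → α)) : Prop :=
  ∀ (N : ℕ) (x : ℕ → α),
    μ {ω | ∀ i ≤ N, ω i = x i} = (if x 0 = a then 1 else 0) * pathWeight P N x

lemma measurable_shift (n : ℕ) : Measurable (shift n : (ℕ → α) → ℕ → α) :=
  measurable_pi_lambda _ fun _ => measurable_pi_apply _

lemma exists_dependsOn_Iic_of_mem_measurableCylinders {s : Set (ℕ → α)}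
    (hs : s ∈ measurableCylinders fun _ => α) : ∃ N, DependsOn (· ∈ s) (Set.Iic N) := by
  simp only [measurableCylinders_nat, Set.mem_iUnion, Set.mem_singleton_iff] at hs
  obtain ⟨N, S, -, rfl⟩ := hs
  refine ⟨N, fun ω ω' h => ?_⟩
  have hres : (Finset.Iic N).restrict ω = (Finset.Iic N).restrict ω' :=
    funext fun i => h i (Finset.mem_Iic.1 i.2)
  simp only [mem_cylinder, hres]

variable {P : α → α → ℝ≥0∞} {a b : α} {μ ν : Measure (ℕ → α)} [MeasurableSingletonClass α]

lemma IsMarkovChainMeasure.ae_start [IsProbabilityMeasure μ] (hμ : IsMarkovChainMeasure P a μ) :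
    ∀ᵐ ω ∂μ, ω 0 = a := by
  have h := hμ 0 fun _ => a
  simp only [nonpos_iff_eq_zero, forall_eq, if_true, pathWeight, Finset.range_zero,
    Finset.prod_empty, mul_one] at h
  rw [ae_iff]
  exact (prob_compl_eq_zero_iff (s := {ω : ℕ → α | ω 0 = a})
    ((measurableSet_singleton a).preimage (measurable_pi_apply 0))).2 h

variable [Countable α]

lemma IsMarkovChainMeasure.measure_eq_pathSum (hμ : IsMarkovChainMeasure P a μ) {N : ℕ}
    {S : Set (ℕ → α)} (hS : DependsOn (· ∈ S) (Set.Iic N)) : μ S = pathSum P a N S := by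
  -- `S` is a union of fibres of the restriction `r` to times `≤ N`, and these fibres are cylinders.
  set r : (ℕ → α) → Fin (N + 1) → α := fun ω i => ω i
  have hr : Measurable r := measurable_pi_lambda _ fun i => measurable_pi_apply _
  have hS' : S = r ⁻¹' {y | extendPath y ∈ S} := by
    ext ω
    exact iff_of_eq (hS fun i (hi : i ≤ N) => by simp [r, extendPath_of_le _ hi])
  have hcyl (y : Fin (N + 1) → α) : r ⁻¹' {y} = {ω | ∀ i ≤ N, ω i = extendPath y i} := by
    ext ω
    simp only [Set.mem_preimage, Set.mem_singleton_iff, funext_iff, Fin.forall_iff, r,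
      Set.mem_ofPred_eq]
    exact forall_congr' fun i => ⟨fun h hi => by rw [h (by omega), extendPath_of_le _ hi],
      fun h hi => by rw [h (by omega), extendPath_of_le _ (by omega)]⟩
  calc μ S = μ.map r {y | extendPath y ∈ S} := by
        rw [Measure.map_apply hr (.of_discrete), ← hS']
    _ = pathSum P a N S := by
        rw [← Measure.tsum_indicator_apply_singleton _ _ (.of_discrete), pathSum]
        refine tsum_congr fun y => ?_
        by_cases hy : extendPath y ∈ S
        · rw [Set.indicator_of_mem (s := {y | extendPath y ∈ S}) hy,
            Measure.map_apply hr (measurableSet_singleton y), hcyl, hμ]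
          by_cases hy₀ : y 0 = a <;> simp [hy, hy₀]
        · rw [Set.indicator_of_notMem (s := {y | extendPath y ∈ S}) hy, if_neg fun h => hy h.2]

lemma IsMarkovChainMeasure.measure_shift_of_dependsOn (hμ : IsMarkovChainMeasure P a μ)
    (hν : IsMarkovChainMeasure P b ν) (n : ℕ) {N : ℕ} {B : Set (ℕ → α)}
    (hB : DependsOn (· ∈ B) (Set.Iic N)) :
    μ {ω | ω n = b ∧ shift n ω ∈ B} = iterKernel P n a b * ν B := by
  rw [hν.measure_eq_pathSum hB, ← pathSum_shift, hμ.measure_eq_pathSum]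
  intro ω ω' h
  have hn : ω n = ω' n := h n (by simp)
  have hshift : (shift n ω ∈ B) = (shift n ω' ∈ B) :=
    hB fun i hi => h (i + n) (by simp only [Set.mem_Iic] at hi ⊢; omega)
  simp only [Set.mem_ofPred_eq, hn, hshift]

lemma IsMarkovChainMeasure.map_shift_restrict [IsFiniteMeasure μ]
    (hμ : IsMarkovChainMeasure P a μ) (hν : IsMarkovChainMeasure P b ν) (n : ℕ) :
    (μ.restrict {ω | ω n = b}).map (shift n) = iterKernel P n a b • ν := by
  have hcyl : ∀ s ∈ measurableCylinders fun _ : ℕ => α,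
      (μ.restrict {ω | ω n = b}).map (shift n) s = (iterKernel P n a b • ν) s := by
    intro s hs
    obtain ⟨N, hN⟩ := exists_dependsOn_Iic_of_mem_measurableCylinders hs
    have hs' := MeasurableSet.of_mem_measurableCylinders hs
    rw [Measure.map_apply (measurable_shift n) hs', Measure.restrict_apply (measurable_shift n hs'),
      Measure.smul_apply, smul_eq_mul, ← hμ.measure_shift_of_dependsOn hν n hN, Set.inter_comm]
    rfl
  exact ext_of_generate_finite _ generateFrom_measurableCylinders.symm
    isPiSystem_measurableCylinders hcyl (hcyl _ (univ_mem_measurableCylinders _))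

lemma IsMarkovChainMeasure.measure_shift [IsFiniteMeasure μ]
    (hμ : IsMarkovChainMeasure P a μ) (hν : IsMarkovChainMeasure P b ν) (n : ℕ)
    {B : Set (ℕ → α)} (hB : MeasurableSet B) :
    μ {ω | ω n = b ∧ shift n ω ∈ B} = iterKernel P n a b * ν B := by
  rw [← smul_eq_mul, ← Measure.smul_apply, ← hμ.map_shift_restrict hν n,
    Measure.map_apply (measurable_shift n) hB, Measure.restrict_apply (measurable_shift n hB),
    Set.inter_comm]
  rfl

end MarkovChain

section Collisions

lemma pn_eq_iterKernel (G : SimpleGraph V) [G.LocallyFinite] : pn G = iterKernel (step G) := by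
  funext n u v
  induction n generalizing u with
  | zero => rfl
  | succ n ih => simp only [pn, ih, iterKernel_succ]

lemma degree_mul_step_comm (G : SimpleGraph V) [G.LocallyFinite] (u v : V) :
    (G.degree u : ℝ≥0∞) * step G u v = G.degree v * step G v u := by
  by_cases h : G.Adj u v
  · have hpos {x y : V} (hxy : G.Adj x y) : (G.degree x : ℝ≥0∞) ≠ 0 := by
      exact_mod_cast ((G.degree_pos_iff_exists_adj x).2 ⟨y, hxy⟩).ne'
    simp [step, h, h.symm, ENNReal.mul_inv_cancel, hpos h, hpos h.symm]
  · have h' : ¬G.Adj v u := fun h' => h h'.symm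
    simp [step, h, h']

lemma IsPairWalkMeasure.isMarkovChainMeasure [MeasurableSpace V] {p : V → V → ℝ≥0∞} {a b : V}
    {μ : Measure (ℕ → V × V)} (hμ : IsPairWalkMeasure p a b μ) :
    IsMarkovChainMeasure (fun x y : V × V => p x.1 y.1 * p x.2 y.2) (a, b) μ := by
  intro N x
  rw [hμ.2 N x, pathWeight]
  congr

def lastCollisionAtTime (n : ℕ) (v : V) : Set (ℕ → V × V) :=
  {ω | ω n = (v, v) ∧ shift n ω ∈ noCollision}

lemma lastCollisionAt_eq_iUnion (v : V) :
    lastCollisionAt v = ⋃ n, lastCollisionAtTime n v := by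
  ext ω
  simp only [lastCollisionAt, lastCollisionAtTime, noCollision, shift, Set.mem_iUnion,
    Set.mem_ofPred_eq]
  refine exists_congr fun n => and_congr_right fun _ =>
    ⟨fun h m hm => h (m + n) (by omega), fun h m hm => ?_⟩
  simpa [Nat.sub_add_cancel hm.le] using h (m - n) (by omega)

lemma le_of_mem_lastCollisionAtTime {ω : ℕ → V × V} {m n : ℕ} {v : V}
    (h : ω ∈ lastCollisionAtTime n v) (hm : (ω m).1 = (ω m).2) : m ≤ n := by
  by_contra! hlt
  exact h.2 (m - n) (by omega) (by simpa [shift, Nat.sub_add_cancel hlt.le] using hm)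

lemma eq_of_mem_lastCollisionAtTime {ω : ℕ → V × V} {m n : ℕ} {v w : V}
    (hv : ω ∈ lastCollisionAtTime m v) (hw : ω ∈ lastCollisionAtTime n w) : m = n ∧ v = w := by
  have hmn : m = n :=
    le_antisymm (le_of_mem_lastCollisionAtTime hw (by rw [hv.1]))
      (le_of_mem_lastCollisionAtTime hv (by rw [hw.1]))
  subst hmn
  exact ⟨rfl, (Prod.ext_iff.1 (hv.1.symm.trans hw.1)).1⟩

lemma pairwise_disjoint_lastCollisionAtTime (v : V) :
    Pairwise (Disjoint on fun n => lastCollisionAtTime n v) := fun _ _ hmn =>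
  Set.disjoint_left.2 fun _ hm hn => hmn (eq_of_mem_lastCollisionAtTime hm hn).1

lemma pairwise_disjoint_lastCollisionAt :
    Pairwise (Disjoint on (lastCollisionAt : V → Set (ℕ → V × V))) :=
  fun _ _ hvw => Set.disjoint_left.2 fun _ hv hw => by
    rw [lastCollisionAt_eq_iUnion, Set.mem_iUnion] at hv hw
    obtain ⟨m, hv⟩ := hv
    obtain ⟨n, hw⟩ := hw
    exact hvw (eq_of_mem_lastCollisionAtTime hv hw).2

lemma finCollisions_eq_union :
    finCollisions = (⋃ v, lastCollisionAt v) ∪ (neverCollide : Set (ℕ → V × V)) := by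
  ext ω
  simp only [lastCollisionAt_eq_iUnion, Set.mem_union, Set.mem_iUnion]
  constructor
  · intro hfin
    rcases Set.eq_empty_or_nonempty {n | (ω n).1 = (ω n).2} with hempty | hne
    · exact Or.inr fun n hn => hempty.subset hn
    · set n := sSup {m | (ω m).1 = (ω m).2}
      have hn : (ω n).1 = (ω n).2 := Nat.sSup_mem hne hfin.bddAbove
      refine Or.inl ⟨(ω n).1, n, Prod.ext rfl hn.symm, fun m hm hcoll => ?_⟩
      have := le_csSup hfin.bddAbove hcoll
      omega
  · rintro (⟨v, n, h⟩ | h)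
    · exact (Set.finite_Iic n).subset fun m hm => le_of_mem_lastCollisionAtTime h hm
    · exact Set.finite_empty.subset fun m hm => h m hm

variable [Countable V] [MeasurableSpace V] [DiscreteMeasurableSpace V]

lemma measurableSet_noCollision : MeasurableSet (noCollision : Set (ℕ → V × V)) := by
  simp only [noCollision, Set.ofPred_forall]
  exact .iInter fun n => .iInter fun _ =>
    (MeasurableSet.of_discrete (s := {p : V × V | p.1 ≠ p.2})).preimage (measurable_pi_apply n)

lemma measurableSet_lastCollisionAtTime (n : ℕ) (v : V) :
    MeasurableSet (lastCollisionAtTime n v) :=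
  ((measurableSet_singleton _).preimage (measurable_pi_apply n)).inter
    (measurableSet_noCollision.preimage (measurable_shift n))

lemma measurableSet_lastCollisionAt (v : V) : MeasurableSet (lastCollisionAt v) := by
  rw [lastCollisionAt_eq_iUnion]
  exact .iUnion fun n => measurableSet_lastCollisionAtTime n v

variable {G : SimpleGraph V} [G.LocallyFinite]

lemma measure_lastCollisionAtTime {u v : V} {μu μv : Measure (ℕ → V × V)}
    (hμu : IsPairWalkMeasure (step G) u u μu) (hμv : IsPairWalkMeasure (step G) v v μv) (n : ℕ) :
    μu (lastCollisionAtTime n v) = pn G n u v * pn G n u v * μv noCollision := by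
  have := hμu.1
  rw [lastCollisionAtTime, hμu.isMarkovChainMeasure.measure_shift hμv.isMarkovChainMeasure n
    measurableSet_noCollision, iterKernel_prod, pn_eq_iterKernel]

lemma measure_finCollisions {μ : V → Measure (ℕ → V × V)}
    (hμ : ∀ w, IsPairWalkMeasure (step G) w w (μ w)) (u : V) :
    μ u finCollisions = ∑' v, ∑' n, pn G n u v * pn G n u v * μ v noCollision := by
  have := (hμ u).1
  have hnever : μ u neverCollide = 0 :=
    measure_eq_zero_iff_ae_notMem.2 <| (hμ u).isMarkovChainMeasure.ae_start.mono
      fun ω h hω => hω 0 (by rw [h])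
  rw [finCollisions_eq_union,
    measure_congr (union_ae_eq_left_of_ae_eq_empty (ae_eq_empty.2 hnever)), measure_iUnion pairwise_disjoint_lastCollisionAt measurableSet_lastCollisionAt]
  simp_rw [lastCollisionAt_eq_iUnion, measure_iUnion (pairwise_disjoint_lastCollisionAtTime _)
    (measurableSet_lastCollisionAtTime · _), measure_lastCollisionAtTime (hμ u) (hμ _)]

end Collisions

theorem mass_transport_total_identity_general
    [Countable V] [MeasurableSpace V] [DiscreteMeasurableSpace V]
    (G : SimpleGraph V) [G.LocallyFinite]
    (μ : V → Measure (ℕ → V × V))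
    (hμ : ∀ w : V, IsPairWalkMeasure (step G) w w (μ w)) :
    ∑' u : V, (G.degree u : ℝ≥0∞) * μ u finCollisions
      = ∑' v : V, (G.degree v : ℝ≥0∞) * μ v noCollision * ∑' n : ℕ, pn G (2 * n) v v := by
  calc ∑' u : V, (G.degree u : ℝ≥0∞) * μ u finCollisions
      = ∑' v, ∑' n, μ v noCollision * ∑' u, G.degree u * (pn G n u v * pn G n u v) := by
        simp_rw [measure_finCollisions hμ, ← ENNReal.tsum_mul_left]
        rw [ENNReal.tsum_comm]
        refine tsum_congr fun v => ?_
        rw [ENNReal.tsum_comm]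
        exact tsum_congr fun n => tsum_congr fun u => by ring
    _ = ∑' v, ∑' n, μ v noCollision * (G.degree v * pn G (2 * n) v v) := by
        simp_rw [pn_eq_iterKernel, tsum_mul_iterKernel_mul_self (degree_mul_step_comm G)]
    _ = ∑' v : V, (G.degree v : ℝ≥0∞) * μ v noCollision * ∑' n : ℕ, pn G (2 * n) v v := by
        simp_rw [← ENNReal.tsum_mul_left]
        exact tsum_congr fun v => tsum_congr fun n => by ring

/-- `Σ_u deg(u) · q_fin(u) = Σ_v deg(v) · q_0(v) · Σ_{n ≥ 0} p_{2n}(v, v)`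
in the extended nonnegative reals. -/
theorem mass_transport_total_identity
    [Countable V] [MeasurableSpace V] [DiscreteMeasurableSpace V]
    (G : SimpleGraph V) [G.LocallyFinite]
    (hconn : G.Connected) (hdeg : ∀ v : V, 0 < G.degree v)
    (μ : V → Measure (ℕ → V × V))
    (hμ : ∀ w : V, IsPairWalkMeasure (step G) w w (μ w)) :
    ∑' u : V, (G.degree u : ℝ≥0∞) * μ u finCollisions
      = ∑' v : V, (G.degree v : ℝ≥0∞) * μ v noCollision * ∑' n : ℕ, pn G (2 * n) v v :=
  mass_transport_total_identity_general G μ hμ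

end CollisionsStmt
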